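/- arXiv:2303.16774 — 7 statements merged into one kernel-verified Lean document; each statement's English description precedes it below -/
import Mathlib

section
/- Let A be a real square matrix, |A| its entrywise absolute value, β ≥ 0 a real number, and k₀ ≤ k₁ natural numbers. Then for all indices i, j, the truncated matrix exponential satisfies the entrywise bound |(∑_{k=k₀}^{k₁} (β^k/k!) A^k)_{ij}| ≤ (∑_{k=k₀}^{k₁} (β^k/k!) |A|^k)_{ij}. In particular, |tr(∑_{k=k₀}^{k₁} (β^k/k!) A^k)| ≤ tr(∑_{k=k₀}^{k₁} (β^k/k!) |A|^k), so whenever the latter trace is positive the global balance index K_S(G,β), defined as the ratio of these two traces, lies in [−1, 1]. -/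
open Matrix


private lemma pow_abs_entry_bound {n : Type*} [Fintype n] [DecidableEq n]
    (A : Matrix n n ℝ) (k : ℕ) (i j : n) :
    |(A ^ k) i j| ≤ ((A.map fun x => |x|) ^ k) i j := by
  induction k generalizing i j with
  | zero =>
    simp [Matrix.one_apply]
    split <;> simp
  | succ m ih =>
    rw [pow_succ, pow_succ, Matrix.mul_apply, Matrix.mul_apply]
    calc |∑ l, (A ^ m) i l * A l j| ≤ ∑ l, |(A ^ m) i l * A l j| :=
          Finset.abs_sum_le_sum_abs _ _
      _ ≤ ∑ l, ((A.map fun x => |x|) ^ m) i l * (A.map fun x => |x|) l j := by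
          refine Finset.sum_le_sum fun l _ => ?_
          rw [abs_mul]
          exact mul_le_mul (ih i l) (le_of_eq rfl) (abs_nonneg _)
            (le_trans (abs_nonneg _) (ih i l))

private lemma entry_bound {n : Type*} [Fintype n] [DecidableEq n]
    (A : Matrix n n ℝ) (β : ℝ) (hβ : 0 ≤ β) (k₀ k₁ : ℕ) (i j : n) :
    |(∑ k ∈ Finset.Icc k₀ k₁, (β ^ k / (Nat.factorial k : ℝ)) • A ^ k) i j| ≤
      (∑ k ∈ Finset.Icc k₀ k₁,
        (β ^ k / (Nat.factorial k : ℝ)) • (A.map fun x => |x|) ^ k) i j := by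
  rw [Matrix.sum_apply, Matrix.sum_apply]
  refine le_trans (Finset.abs_sum_le_sum_abs _ _) (Finset.sum_le_sum fun k _ => ?_)
  have hc : 0 ≤ β ^ k / (Nat.factorial k : ℝ) :=
    div_nonneg (pow_nonneg hβ k) (Nat.cast_nonneg _)
  rw [Matrix.smul_apply, Matrix.smul_apply, smul_eq_mul, smul_eq_mul, abs_mul,
    abs_of_nonneg hc]
  exact mul_le_mul_of_nonneg_left (pow_abs_entry_bound A k i j) hc

/-- Entrywise and trace bounds for the truncated matrix exponential
`exp_{k₀}^{k₁}[βA] = ∑_{k=k₀}^{k₁} (β^k/k!) A^k` against the one of `|A|`, and the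
consequence that the global balance index lies in `[-1, 1]`. -/
theorem truncated_exp_bounds {n : Type*} [Fintype n] [DecidableEq n]
    (A : Matrix n n ℝ) (β : ℝ) (hβ : 0 ≤ β) (k₀ k₁ : ℕ) (hk : k₀ ≤ k₁) :
    (∀ i j : n,
      |(∑ k ∈ Finset.Icc k₀ k₁, (β ^ k / (Nat.factorial k : ℝ)) • A ^ k) i j| ≤
        (∑ k ∈ Finset.Icc k₀ k₁,
          (β ^ k / (Nat.factorial k : ℝ)) • (A.map fun x => |x|) ^ k) i j) ∧
    |(∑ k ∈ Finset.Icc k₀ k₁, (β ^ k / (Nat.factorial k : ℝ)) • A ^ k).trace| ≤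
      (∑ k ∈ Finset.Icc k₀ k₁,
        (β ^ k / (Nat.factorial k : ℝ)) • (A.map fun x => |x|) ^ k).trace ∧
    (0 < (∑ k ∈ Finset.Icc k₀ k₁,
        (β ^ k / (Nat.factorial k : ℝ)) • (A.map fun x => |x|) ^ k).trace →
      -1 ≤ (∑ k ∈ Finset.Icc k₀ k₁, (β ^ k / (Nat.factorial k : ℝ)) • A ^ k).trace /
          (∑ k ∈ Finset.Icc k₀ k₁,
            (β ^ k / (Nat.factorial k : ℝ)) • (A.map fun x => |x|) ^ k).trace ∧
      (∑ k ∈ Finset.Icc k₀ k₁, (β ^ k / (Nat.factorial k : ℝ)) • A ^ k).trace /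
          (∑ k ∈ Finset.Icc k₀ k₁,
            (β ^ k / (Nat.factorial k : ℝ)) • (A.map fun x => |x|) ^ k).trace ≤ 1) := by
  refine ⟨entry_bound A β hβ k₀ k₁, ?_, ?_⟩
  · unfold Matrix.trace Matrix.diag
    refine le_trans (Finset.abs_sum_le_sum_abs _ _) (Finset.sum_le_sum fun i _ => ?_)
    exact entry_bound A β hβ k₀ k₁ i i
  · intro hpos
    have h : |(∑ k ∈ Finset.Icc k₀ k₁, (β ^ k / (Nat.factorial k : ℝ)) • A ^ k).trace| ≤
        (∑ k ∈ Finset.Icc k₀ k₁,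
          (β ^ k / (Nat.factorial k : ℝ)) • (A.map fun x => |x|) ^ k).trace := by
      unfold Matrix.trace Matrix.diag
      refine le_trans (Finset.abs_sum_le_sum_abs _ _) (Finset.sum_le_sum fun i _ => ?_)
      exact entry_bound A β hβ k₀ k₁ i i
    constructor
    · rw [neg_le, ← neg_div, div_le_one hpos]
      exact le_trans (neg_le_abs _) h
    · rw [div_le_one hpos]
      exact le_trans (le_abs_self _) h
end

section
/- Let A be a real square matrix with A = D·|A|·D for some signature matrix D (diagonal with ±1 entries), let β be a real number, and let k₀ ≤ k₁ be natural numbers. Then tr(∑_{k=k₀}^{k₁} (β^k/k!) A^k) = tr(∑_{k=k₀}^{k₁} (β^k/k!) |A|^k); hence whenever the right-hand trace is positive, the global balance index K_S(G,β) equals 1 (a perfectly balanced network attains the maximal global balance index). -/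
open Matrix

/-- If `A = D·|A|·D` for a signature matrix `D`, then the traces of the truncated matrix
exponentials of `βA` and `β|A|` coincide; hence whenever the latter is positive, the
global balance index `K_S(G,β)` equals `1`. -/
theorem balanced_switching_global_balance_index_eq_one {n : Type*} [Fintype n] [DecidableEq n]
    (A D : Matrix n n ℝ) (hD : D.IsDiag) (hD1 : ∀ i, D i i = 1 ∨ D i i = -1)
    (hA : A = D * (A.map fun x => |x|) * D) (β : ℝ) (k₀ k₁ : ℕ) (hk : k₀ ≤ k₁) :
    (∑ k ∈ Finset.Icc k₀ k₁, (β ^ k / (Nat.factorial k : ℝ)) • A ^ k).trace =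
      (∑ k ∈ Finset.Icc k₀ k₁,
        (β ^ k / (Nat.factorial k : ℝ)) • (A.map fun x => |x|) ^ k).trace ∧
    (0 < (∑ k ∈ Finset.Icc k₀ k₁,
        (β ^ k / (Nat.factorial k : ℝ)) • (A.map fun x => |x|) ^ k).trace →
      (∑ k ∈ Finset.Icc k₀ k₁, (β ^ k / (Nat.factorial k : ℝ)) • A ^ k).trace /
        (∑ k ∈ Finset.Icc k₀ k₁,
          (β ^ k / (Nat.factorial k : ℝ)) • (A.map fun x => |x|) ^ k).trace = 1) := by
  set B := A.map fun x => |x| with hB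
  have hDD : D * D = 1 := by
    ext i j
    simp only [Matrix.mul_apply, Matrix.one_apply]
    by_cases h : i = j
    · subst h
      rw [Finset.sum_eq_single i]
      · rcases hD1 i with h1 | h1 <;> simp [h1]
      · intro b _ hb; rw [hD (Ne.symm hb)]; ring
      · simp
    · rw [Finset.sum_eq_zero]
      · simp [h]
      · intro b _
        by_cases hib : i = b
        · subst hib; rw [hD h]; ring
        · rw [hD hib]; ring
  have hpow : ∀ k, A ^ k = D * B ^ k * D := by
    intro k
    induction k with
    | zero => simp [hDD]
    | succ m ih =>
      rw [pow_succ, pow_succ, ih, hA]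
      simp only [Matrix.mul_assoc]
      rw [← Matrix.mul_assoc D D, hDD, Matrix.one_mul]
  have htr : (∑ k ∈ Finset.Icc k₀ k₁, (β ^ k / (Nat.factorial k : ℝ)) • A ^ k).trace =
      (∑ k ∈ Finset.Icc k₀ k₁, (β ^ k / (Nat.factorial k : ℝ)) • B ^ k).trace := by
    rw [Matrix.trace_sum, Matrix.trace_sum]
    refine Finset.sum_congr rfl fun k _ => ?_
    rw [Matrix.trace_smul, Matrix.trace_smul, hpow k, Matrix.trace_mul_cycle, hDD, Matrix.one_mul]
  exact ⟨htr, fun hpos => by rw [htr, div_self (ne_of_gt hpos)]⟩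
end

section
/- Let S be a real square matrix with nonnegative entries, k₀ ≤ k < k₁ natural numbers with tr(S^k) > 0 and tr(S^{k+1}) > 0, β > 0, and suppose tr(∑_{l=k₀}^{k₁} (β^l/l!) S^l) > 0. Then the contribution scores satisfy C(β,k) > C(β,k+1) if and only if β < (k+1)·tr(S^k)/tr(S^{k+1}). -/
open Matrix

/-- Trace of the truncated matrix exponential `exp_{k₀}^{k₁}[βS] = ∑_{l=k₀}^{k₁} (β^l/l!) S^l`. -/
noncomputable def texpTrace {n : Type*} [Fintype n] [DecidableEq n]
    (S : Matrix n n ℝ) (β : ℝ) (k₀ k₁ : ℕ) : ℝ :=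
  (∑ l ∈ Finset.Icc k₀ k₁, (β ^ l / (Nat.factorial l : ℝ)) • S ^ l).trace

/-- Contribution score of closed semiwalks of length `k` over the length range `[k₀, k₁]`
at inverse temperature `β`: `C(β,k) = (β^k/k!)·tr(S^k) / tr(exp_{k₀}^{k₁}[βS])`. -/
noncomputable def contrib {n : Type*} [Fintype n] [DecidableEq n]
    (S : Matrix n n ℝ) (β : ℝ) (k₀ k₁ k : ℕ) : ℝ :=
  (β ^ k / (Nat.factorial k : ℝ)) * (S ^ k).trace / texpTrace S β k₀ k₁

/-- Consecutive contribution scores satisfy `C(β,k) > C(β,k+1)` if and only if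
`β < (k+1)·tr(S^k)/tr(S^{k+1})`. -/
theorem contrib_succ_lt_iff {n : Type*} [Fintype n] [DecidableEq n]
    (S : Matrix n n ℝ) (hS : ∀ i j, 0 ≤ S i j) (k₀ k k₁ : ℕ)
    (hk₀ : k₀ ≤ k) (hk₁ : k < k₁)
    (htrk : 0 < (S ^ k).trace) (htrk1 : 0 < (S ^ (k + 1)).trace)
    (β : ℝ) (hβ : 0 < β) (hT : 0 < texpTrace S β k₀ k₁) :
    contrib S β k₀ k₁ (k + 1) < contrib S β k₀ k₁ k ↔
      β < ((k : ℝ) + 1) * (S ^ k).trace / (S ^ (k + 1)).trace := by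
  have hfac : (0 : ℝ) < (Nat.factorial k : ℝ) := by positivity
  have hβk : (0 : ℝ) < β ^ k := pow_pos hβ k
  rw [contrib, contrib, div_lt_div_iff_of_pos_right hT, lt_div_iff₀ htrk1,
    pow_succ, Nat.factorial_succ, Nat.cast_mul, Nat.cast_add, Nat.cast_one,
    div_mul_eq_mul_div, div_mul_eq_mul_div, div_lt_div_iff₀ (by positivity) hfac]
  constructor <;> intro h
  · nlinarith [mul_lt_mul_of_pos_left h (by positivity : (0:ℝ) < β ^ k * (Nat.factorial k : ℝ))]
  · nlinarith [mul_lt_mul_of_pos_left h (by positivity : (0:ℝ) < β ^ k * (Nat.factorial k : ℝ))]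
end

section
/- Let S be a real square matrix with nonnegative entries and k₀ < k₁ natural numbers such that tr(S^k) > 0 for every k with k₀ ≤ k ≤ k₁, and suppose tr(∑_{l=k₀}^{k₁} (β^l/l!) S^l) > 0 for all β > 0. Set β* = min over k₀ ≤ k < k₁ of (k+1)·tr(S^k)/tr(S^{k+1}). Then β* > 0, and the contribution profile is strictly decreasing, C(β,k₀) > C(β,k₀+1) > … > C(β,k₁), if and only if 0 < β < β*. In particular, a positive resolution value β satisfying the strictly decreasing (Locality Principle) ordering always exists. -/
open Matrix

/-- With `β* = min_{k₀ ≤ k < k₁} (k+1)·tr(S^k)/tr(S^{k+1})`, we have `β* > 0` and the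
contribution profile `C(β,k₀) > C(β,k₀+1) > … > C(β,k₁)` is strictly decreasing iff
`0 < β < β*`; in particular a positive resolution value satisfying the Locality
Principle always exists. -/
theorem locality_principle_beta_exists {n : Type*} [Fintype n] [DecidableEq n]
    (S : Matrix n n ℝ) (hS : ∀ i j, 0 ≤ S i j) (k₀ k₁ : ℕ) (hk : k₀ < k₁)
    (htr : ∀ k, k₀ ≤ k → k ≤ k₁ → 0 < (S ^ k).trace)
    (hT : ∀ β : ℝ, 0 < β → 0 < texpTrace S β k₀ k₁) :
    0 < (Finset.Ico k₀ k₁).inf' (Finset.nonempty_Ico.mpr hk)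
        (fun k => ((k : ℝ) + 1) * (S ^ k).trace / (S ^ (k + 1)).trace) ∧
    (∀ β : ℝ, 0 < β →
      ((∀ k, k₀ ≤ k → k < k₁ → contrib S β k₀ k₁ (k + 1) < contrib S β k₀ k₁ k) ↔
        β < (Finset.Ico k₀ k₁).inf' (Finset.nonempty_Ico.mpr hk)
          (fun k => ((k : ℝ) + 1) * (S ^ k).trace / (S ^ (k + 1)).trace))) ∧
    ∃ β : ℝ, 0 < β ∧
      ∀ k, k₀ ≤ k → k < k₁ → contrib S β k₀ k₁ (k + 1) < contrib S β k₀ k₁ k := by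
  
  set m := (Finset.Ico k₀ k₁).inf' (Finset.nonempty_Ico.mpr hk)
      (fun k => ((k : ℝ) + 1) * (S ^ k).trace / (S ^ (k + 1)).trace) with hm
  have hpos : ∀ k ∈ Finset.Ico k₀ k₁,
      0 < ((k : ℝ) + 1) * (S ^ k).trace / (S ^ (k + 1)).trace := by
    intro k hkmem
    rw [Finset.mem_Ico] at hkmem
    apply div_pos
    · exact mul_pos (by positivity) (htr k hkmem.1 (le_of_lt hkmem.2))
    · exact htr (k + 1) (le_trans hkmem.1 (Nat.le_succ k)) hkmem.2
  have hmpos : 0 < m := by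
    rw [hm, Finset.lt_inf'_iff]
    exact hpos
  have key : ∀ β : ℝ, 0 < β → ∀ k, k₀ ≤ k → k < k₁ →
      (contrib S β k₀ k₁ (k + 1) < contrib S β k₀ k₁ k ↔
        β < ((k : ℝ) + 1) * (S ^ k).trace / (S ^ (k + 1)).trace) := by
    intro β hβ k hk0 hk1
    have hTpos := hT β hβ
    have htk : 0 < (S ^ k).trace := htr k hk0 (le_of_lt hk1)
    have htk1 : 0 < (S ^ (k + 1)).trace := htr (k + 1) (le_trans hk0 (Nat.le_succ k)) hk1
    have hfac : (0 : ℝ) < (Nat.factorial k : ℝ) := by positivity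
    unfold contrib
    rw [div_lt_div_iff_of_pos_right hTpos, lt_div_iff₀ htk1]
    rw [pow_succ]
    have hfs : ((Nat.factorial (k + 1)) : ℝ) = ((k : ℝ) + 1) * (Nat.factorial k : ℝ) := by
      push_cast [Nat.factorial_succ]; ring
    rw [hfs]
    have hbk : (0 : ℝ) < β ^ k / (Nat.factorial k : ℝ) := by positivity
    have e1 : β ^ k * β / (((k : ℝ) + 1) * (Nat.factorial k : ℝ)) * (S ^ (k + 1)).trace
        = (β ^ k / (Nat.factorial k : ℝ)) * (β * (S ^ (k + 1)).trace / ((k : ℝ) + 1)) := by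
      field_simp
    have e2 : β ^ k / (Nat.factorial k : ℝ) * (S ^ k).trace
        = (β ^ k / (Nat.factorial k : ℝ)) * (S ^ k).trace := rfl
    rw [e1, e2, mul_lt_mul_iff_right₀ hbk, div_lt_iff₀ (by positivity : (0:ℝ) < (k : ℝ) + 1),
      mul_comm ((S ^ k).trace)]
  refine ⟨hmpos, ?_, ?_⟩
  · intro β hβ
    constructor
    · intro h
      rw [hm, Finset.lt_inf'_iff]
      intro k hkmem
      rw [Finset.mem_Ico] at hkmem
      exact (key β hβ k hkmem.1 hkmem.2).mp (h k hkmem.1 hkmem.2)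
    · intro h k hk0 hk1
      rw [hm, Finset.lt_inf'_iff] at h
      exact (key β hβ k hk0 hk1).mpr (h k (Finset.mem_Ico.mpr ⟨hk0, hk1⟩))
  · refine ⟨m / 2, half_pos hmpos, fun k hk0 hk1 => ?_⟩
    refine (key (m / 2) (half_pos hmpos) k hk0 hk1).mpr ?_
    calc m / 2 < m := half_lt_self hmpos
    _ ≤ _ := by
        rw [hm]
        exact Finset.inf'_le _ (Finset.mem_Ico.mpr ⟨hk0, hk1⟩)
end

section
/- Let S be a real square matrix with nonnegative entries and k₀ < k₁ natural numbers with tr(S^{k₀}) > 0 and tr(S^k) ≥ 0 for all k₀ ≤ k ≤ k₁. Then as β tends to 0 from the right, the contribution score of the shortest length tends to 1, i.e., C(β,k₀) → 1, and C(β,k) → 0 for every k with k₀ < k ≤ k₁ (in the high-temperature limit only the shortest scale matters). -/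
open Matrix

open Filter Topology in
/-- In the high-temperature limit `β → 0⁺`, the contribution of the shortest length tends
to `1` while the contribution of every longer length tends to `0`. -/
theorem contrib_tendsto_zero_right {n : Type*} [Fintype n] [DecidableEq n]
    (S : Matrix n n ℝ) (hS : ∀ i j, 0 ≤ S i j) (k₀ k₁ : ℕ) (hk : k₀ < k₁)
    (htr₀ : 0 < (S ^ k₀).trace) (htr : ∀ k, k₀ ≤ k → k ≤ k₁ → 0 ≤ (S ^ k).trace) :
    Tendsto (fun β : ℝ => contrib S β k₀ k₁ k₀) (𝓝[>] (0 : ℝ)) (𝓝 1) ∧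
    ∀ k, k₀ < k → k ≤ k₁ →
      Tendsto (fun β : ℝ => contrib S β k₀ k₁ k) (𝓝[>] (0 : ℝ)) (𝓝 0) := by
  set D : ℝ → ℝ := fun β => ∑ l ∈ Finset.Icc k₀ k₁,
      β ^ (l - k₀) / (Nat.factorial l : ℝ) * (S ^ l).trace with hD
  set N : ℕ → ℝ → ℝ := fun k β => β ^ (k - k₀) / (Nat.factorial k : ℝ) * (S ^ k).trace with hN
  have hD0 : D 0 = (S ^ k₀).trace / (Nat.factorial k₀ : ℝ) := by
    simp only [hD]
    rw [Finset.sum_eq_single k₀]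
    · rw [Nat.sub_self, pow_zero]; ring
    · intro l hl hne
      have : 0 < l - k₀ := by
        have := (Finset.mem_Icc.mp hl).1
        omega
      simp [zero_pow this.ne']
    · intro h
      exact absurd (Finset.mem_Icc.mpr ⟨le_refl _, hk.le⟩) h
  have hD0pos : 0 < D 0 := by
    rw [hD0]; positivity
  have htexp : ∀ β : ℝ, texpTrace S β k₀ k₁ = β ^ k₀ * D β := by
    intro β
    rw [texpTrace, Matrix.trace_sum, hD, Finset.mul_sum]
    refine Finset.sum_congr rfl fun l hl => ?_
    rw [Matrix.trace_smul, smul_eq_mul]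
    have h1 : β ^ l = β ^ k₀ * β ^ (l - k₀) := by
      rw [← pow_add, Nat.add_sub_cancel' (Finset.mem_Icc.mp hl).1]
    rw [h1]; ring
  have hcon : ∀ k, k₀ ≤ k → ∀ β : ℝ, β ≠ 0 →
      contrib S β k₀ k₁ k = N k β / D β := by
    intro k hkk β hβ
    rw [contrib, htexp]
    have h1 : β ^ k = β ^ k₀ * β ^ (k - k₀) := by
      rw [← pow_add, Nat.add_sub_cancel' hkk]
    have h2 : β ^ k / (Nat.factorial k : ℝ) * (S ^ k).trace = β ^ k₀ * N k β := by
      rw [h1, hN]; ring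
    rw [h2, mul_div_mul_left _ _ (pow_ne_zero _ hβ)]
  have key : ∀ k, k₀ ≤ k → k ≤ k₁ →
      Tendsto (fun β : ℝ => contrib S β k₀ k₁ k) (𝓝[>] (0 : ℝ))
        (𝓝 (N k 0 / D 0)) := by
    intro k hkk hkk1
    have hcont : Tendsto (fun β : ℝ => N k β / D β) (𝓝 (0:ℝ)) (𝓝 (N k 0 / D 0)) := by
      apply Tendsto.div
      · exact (Continuous.tendsto (by continuity) 0)
      · exact (Continuous.tendsto (by fun_prop) 0)
      · exact hD0pos.ne'
    refine Tendsto.congr' ?_ (hcont.mono_left nhdsWithin_le_nhds)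
    filter_upwards [self_mem_nhdsWithin] with β (hβ : 0 < β)
    exact (hcon k hkk β hβ.ne').symm
  constructor
  · have h := key k₀ le_rfl hk.le
    have hN0 : N k₀ 0 = (S ^ k₀).trace / (Nat.factorial k₀ : ℝ) := by
      simp only [hN]; rw [Nat.sub_self, pow_zero]; ring
    rw [hN0, hD0, div_self (by positivity)] at h
    exact h
  · intro k hkk hkk1
    have h := key k hkk.le hkk1
    have hN0 : N k 0 = 0 := by
      have : 0 < k - k₀ := by omega
      simp [hN, zero_pow this.ne']
    rw [hN0, zero_div] at h
    exact h
end

section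
/- (Harary's strong structure theorem, switching form.) Let G be a simple graph on a finite vertex set V with an edge sign function σ assigning to each edge a sign in {+1, −1} (symmetrically: σ(u,v) = σ(v,u) for adjacent u, v). Then every cycle of G is positive (the product of the signs of its edges equals +1) if and only if there exists a function ε : V → {+1, −1} such that σ(u,v) = ε(u)·ε(v) for every edge {u,v} of G. -/
/-!
If every cycle is positive then so is every closed walk: removing the loops of a walk
(`SimpleGraph.Walk.bypass`) cuts off closed subwalks `u → v ⇝ u` that are either a positive
cycle or a backtrack along one edge, so it does not change the sign, and the bypass of a closed
walk is trivial. Consequently, fixing a root in each connected component, the sign `ε v` of any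
walk from the root to `v` gives the switching function. Conversely, if `σ(u,v) = ε(u) ε(v)`, the
sign of a walk from `a` to `b` telescopes to `ε(a) ε(b)`, which is `ε(a)² = 1` on closed walks.
-/

/-- The sign of a walk in a signed graph: the product of the edge signs along it. -/
def walkSign {V : Type*} {G : SimpleGraph V} (σ : V → V → ℤ) {u v : V}
    (w : G.Walk u v) : ℤ :=
  (w.darts.map fun d => σ d.fst d.snd).prod

section SignedGraph

open SimpleGraph Walk

variable {V : Type*} {G : SimpleGraph V} {σ : V → V → ℤ} {u v : V}

lemma walkSign_of_nil {p : G.Walk u u} (hp : p.Nil) : walkSign σ p = 1 := by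
  simp [walkSign, darts_eq_nil.mpr hp]

@[simp]
lemma walkSign_cons {w : V} (h : G.Adj u v) (p : G.Walk v w) :
    walkSign σ (cons h p) = σ u v * walkSign σ p := by
  simp [walkSign]

@[simp]
lemma walkSign_append {w : V} (p : G.Walk u v) (q : G.Walk v w) :
    walkSign σ (p.append q) = walkSign σ p * walkSign σ q := by
  simp [walkSign]

@[simp]
lemma walkSign_copy {u' v' : V} (p : G.Walk u v) (hu : u = u') (hv : v = v') :
    walkSign σ (p.copy hu hv) = walkSign σ p := by
  subst hu hv
  rfl

lemma walkSign_reverse (hsymm : ∀ u v, G.Adj u v → σ u v = σ v u) (p : G.Walk u v) :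
    walkSign σ p.reverse = walkSign σ p := by
  simp only [walkSign, darts_reverse, List.map_reverse, List.prod_reverse, List.map_map]
  congr 1
  exact List.map_congr_left fun d _ => (hsymm d.fst d.snd d.adj).symm

lemma isUnit_walkSign (hsign : ∀ u v, G.Adj u v → IsUnit (σ u v)) (p : G.Walk u v) :
    IsUnit (walkSign σ p) :=
  List.prod_isUnit <| by simpa using fun d _ => hsign _ _ d.adj

lemma walkSign_eq_mul_of_switching {ε : V → ℤ} (hε : ∀ v, IsUnit (ε v))
    (hσ : ∀ u v, G.Adj u v → σ u v = ε u * ε v) (p : G.Walk u v) :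
    walkSign σ p = ε u * ε v := by
  induction p with
  | nil => exact (walkSign_of_nil Nil.nil).trans (Int.isUnit_mul_self (hε _)).symm
  | @cons a b c h p ih =>
    rw [walkSign_cons, ih, hσ a b h]
    linear_combination ε a * ε c * Int.isUnit_mul_self (hε b)

section Balanced

variable (hsymm : ∀ u v, G.Adj u v → σ u v = σ v u)
  (hsign : ∀ u v, G.Adj u v → IsUnit (σ u v))
  (hcyc : ∀ (u : V) (w : G.Walk u u), w.IsCycle → walkSign σ w = 1)
include hsymm hsign hcyc

/-- Closing a path `v ⇝ u` by an edge `u v` yields either a cycle or the backtrack `u → v → u`. -/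
lemma mul_walkSign_eq_one_of_isPath (h : G.Adj u v) {p : G.Walk v u} (hp : p.IsPath) :
    σ u v * walkSign σ p = 1 := by
  cases p with
  | nil => exact absurd rfl h.ne
  | @cons _ z _ h' t =>
    by_cases hz : z = u
    · subst hz
      have ht : t.Nil := isPath_iff_nil.mp hp.of_cons
      rw [walkSign_cons, walkSign_of_nil ht, mul_one, ← hsymm _ _ h]
      exact Int.isUnit_mul_self (hsign _ _ h)
    · have hvt : v ∉ t.support := ((cons_isPath_iff h' t).mp hp).2
      have hedge : s(u, v) ∉ (cons h' t).edges := by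
        rw [edges_cons, List.mem_cons, not_or]
        refine ⟨fun he => ?_, fun he => hvt (t.snd_mem_support_of_mem_edges he)⟩
        rcases Sym2.eq_iff.mp he with ⟨huv, -⟩ | ⟨huz, -⟩
        · exact h.ne huv
        · exact hz huz.symm
      simpa using hcyc u _ ((cons_isCycle_iff _ h).mpr ⟨hp, hedge⟩)

lemma walkSign_bypass [DecidableEq V] (p : G.Walk u v) : walkSign σ p.bypass = walkSign σ p := by
  induction p with
  | nil => rfl
  | @cons a b c h p ih =>
    rw [bypass]
    split_ifs with hs
    · have hloop := mul_walkSign_eq_one_of_isPath hsymm hsign hcyc h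
        ((bypass_isPath p).takeUntil hs)
      conv_rhs => rw [walkSign_cons, ← ih, ← p.bypass.take_spec hs, walkSign_append,
        ← mul_assoc, hloop, one_mul]
    · rw [walkSign_cons, walkSign_cons, ih]

lemma walkSign_eq_one_of_closed (w : G.Walk u u) : walkSign σ w = 1 := by
  classical
  rw [← walkSign_bypass hsymm hsign hcyc]
  exact walkSign_of_nil (isPath_iff_nil.mp (bypass_isPath w))

theorem exists_switching_of_forall_isCycle :
    ∃ ε : V → ℤ, (∀ v, IsUnit (ε v)) ∧ ∀ u v, G.Adj u v → σ u v = ε u * ε v := by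
  have hroot (v : V) : G.Reachable (G.connectedComponentMk v).out v :=
    ConnectedComponent.exact (G.connectedComponentMk v).out_eq
  set fromRoot := fun v => (hroot v).some
  set s := fun v => walkSign σ (fromRoot v)
  have hs (v : V) : s v * s v = 1 := Int.isUnit_mul_self (isUnit_walkSign hsign _)
  refine ⟨s, fun v => isUnit_walkSign hsign _, fun u v h => ?_⟩
  have hsame : (G.connectedComponentMk v).out = (G.connectedComponentMk u).out :=
    congrArg Quot.out (ConnectedComponent.sound h.symm.reachable)
  have hclosed : s u * (σ u v * s v) = 1 := by
    simpa [walkSign_reverse hsymm] using walkSign_eq_one_of_closed hsymm hsign hcyc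
      (((fromRoot u).append (cons h (fromRoot v).reverse)).copy rfl hsame)
  linear_combination s u * s v * hclosed - σ u v * hs u - σ u v * s u ^ 2 * hs v

end Balanced

end SignedGraph

theorem harary_strong_structure_switching_general {V : Type*}
    (G : SimpleGraph V) (σ : V → V → ℤ)
    (hsymm : ∀ u v, G.Adj u v → σ u v = σ v u)
    (hsign : ∀ u v, G.Adj u v → σ u v = 1 ∨ σ u v = -1) :
    (∀ (u : V) (w : G.Walk u u), w.IsCycle → walkSign σ w = 1) ↔
      ∃ ε : V → ℤ, (∀ v, ε v = 1 ∨ ε v = -1) ∧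
        ∀ u v, G.Adj u v → σ u v = ε u * ε v := by
  constructor
  · intro hcyc
    obtain ⟨ε, hε, hσ⟩ :=
      exists_switching_of_forall_isCycle hsymm (fun u v h => Int.isUnit_iff.mpr (hsign u v h)) hcyc
    exact ⟨ε, fun v => Int.isUnit_iff.mp (hε v), hσ⟩
  · rintro ⟨ε, hε, hσ⟩ u w -
    have hε' (v : V) : IsUnit (ε v) := Int.isUnit_iff.mpr (hε v)
    rw [walkSign_eq_mul_of_switching hε' hσ w]
    exact Int.isUnit_mul_self (hε' u)

/-- Harary's strong structure theorem (switching form): every cycle of a signed graph is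
positive iff there is a switching function `ε : V → {±1}` with `σ(u,v) = ε(u)·ε(v)`
for every edge. -/
theorem harary_strong_structure_switching {V : Type*} [Fintype V]
    (G : SimpleGraph V) (σ : V → V → ℤ)
    (hsymm : ∀ u v, G.Adj u v → σ u v = σ v u)
    (hsign : ∀ u v, G.Adj u v → σ u v = 1 ∨ σ u v = -1) :
    (∀ (u : V) (w : G.Walk u u), w.IsCycle → walkSign σ w = 1) ↔
      ∃ ε : V → ℤ, (∀ v, ε v = 1 ∨ ε v = -1) ∧
        ∀ u v, G.Adj u v → σ u v = ε u * ε v :=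
  harary_strong_structure_switching_general G σ hsymm hsign
end

section
/- (Davis's weak structure theorem.) Let G be a simple graph on a finite vertex set V with a symmetric edge sign function σ with values in {+1, −1}. Then there exists a clustering of the vertices, i.e., a function f : V → C into some set of clusters such that every positive edge joins two vertices with f(u) = f(v) and every negative edge joins vertices with f(u) ≠ f(v), if and only if G contains no cycle with exactly one negative edge. -/
/-!
A clustering is constant along positive edges, so along a walk it changes value at most at the
negative edges; a cycle with a single negative edge would force the two ends of that edge into the
same cluster. Conversely, cluster by the connected components of the positive subgraph: a negative
edge inside one component closes, together with a positive path joining its ends, a cycle with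
exactly one negative edge.
-/

universe u

namespace SimpleGraph

variable {V : Type*} {G : SimpleGraph V}

structure IsClustering {C : Type*} (G : SimpleGraph V) (σ : V → V → ℤ) (f : V → C) : Prop where
  eq_of_pos : ∀ u v, G.Adj u v → σ u v = 1 → f u = f v
  ne_of_neg : ∀ u v, G.Adj u v → σ u v = -1 → f u ≠ f v

/-- Both orientations are required so that the relation is symmetric without assuming `σ` is. -/
def posGraph (G : SimpleGraph V) (σ : V → V → ℤ) : SimpleGraph V where
  Adj u v := G.Adj u v ∧ σ u v = 1 ∧ σ v u = 1
  symm := ⟨fun _ _ h => ⟨h.1.symm, h.2.2, h.2.1⟩⟩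
  loopless := ⟨fun v h => G.loopless.irrefl v h.1⟩

@[simp]
lemma posGraph_adj {σ : V → V → ℤ} {u v : V} :
    (G.posGraph σ).Adj u v ↔ G.Adj u v ∧ σ u v = 1 ∧ σ v u = 1 :=
  Iff.rfl

lemma posGraph_le (σ : V → V → ℤ) : G.posGraph σ ≤ G := fun _ _ h => h.1

namespace Walk

variable (σ : V → V → ℤ)

def negCount {u v : V} (w : G.Walk u v) : ℕ :=
  (w.darts.map fun d => σ d.fst d.snd).count (-1)

@[simp]
lemma negCount_nil {u : V} : (nil : G.Walk u u).negCount σ = 0 := rfl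

@[simp]
lemma negCount_cons {u v w : V} (h : G.Adj u v) (p : G.Walk v w) :
    (cons h p).negCount σ = p.negCount σ + if σ u v = -1 then 1 else 0 := by
  simp [negCount, List.count_cons]

lemma negCount_mapLe_posGraph {u v : V} (p : (G.posGraph σ).Walk u v) :
    (p.mapLe (posGraph_le σ)).negCount σ = 0 := by
  induction p with
  | nil => rfl
  | cons h p ih =>
    show (cons h.1 (p.mapLe _)).negCount σ = 0
    simp [ih, h.2.1]

end Walk

namespace IsClustering

variable {σ : V → V → ℤ} {C : Type*} {f : V → C} (hf : G.IsClustering σ f)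
  (hsign : ∀ u v, G.Adj u v → σ u v = 1 ∨ σ u v = -1)
include hf hsign

lemma eq_of_negCount_eq_zero {a b : V} (w : G.Walk a b) (hw : w.negCount σ = 0) : f a = f b := by
  induction w with
  | nil => rfl
  | @cons a x b h p ih =>
    have hpos : σ a x ≠ -1 := fun hneg => by simp [hneg] at hw
    have htail : p.negCount σ = 0 := by simpa [hpos] using hw
    exact (hf.eq_of_pos a x h ((hsign a x h).resolve_right hpos)).trans (ih htail)

lemma ne_of_negCount_eq_one {a b : V} (w : G.Walk a b) (hw : w.negCount σ = 1) : f a ≠ f b := by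
  induction w with
  | nil => simp at hw
  | @cons a x b h p ih =>
    by_cases hneg : σ a x = -1
    · have htail : p.negCount σ = 0 := by simpa [hneg] using hw
      rw [← hf.eq_of_negCount_eq_zero hsign p htail]
      exact hf.ne_of_neg a x h hneg
    · have htail : p.negCount σ = 1 := by simpa [hneg] using hw
      rw [hf.eq_of_pos a x h ((hsign a x h).resolve_right hneg)]
      exact ih htail

lemma not_exists_isCycle_negCount_eq_one :
    ¬∃ (u : V) (w : G.Walk u u), w.IsCycle ∧ w.negCount σ = 1 :=
  fun ⟨_, w, _, hw⟩ => hf.ne_of_negCount_eq_one hsign w hw rfl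

end IsClustering

variable {σ : V → V → ℤ}

lemma exists_isCycle_negCount_eq_one_of_reachable {u v : V} (hadj : G.Adj u v)
    (hneg : σ u v = -1) (hreach : (G.posGraph σ).Reachable v u) :
    ∃ w : G.Walk u u, w.IsCycle ∧ w.negCount σ = 1 := by
  classical
  obtain ⟨p, hp⟩ := hreach.exists_isPath
  have huv : s(u, v) ∉ p.edges := fun he => by
    have h := p.edges_subset_edgeSet he
    simp [hneg] at h
  refine ⟨.cons hadj (p.mapLe (posGraph_le σ)), ?_, ?_⟩
  · rw [Walk.cons_isCycle_iff, Walk.isPath_mapLe, Walk.edges_mapLe_eq_edges]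
    exact ⟨hp, huv⟩
  · simp [Walk.negCount_mapLe_posGraph, hneg]

lemma isClustering_connectedComponentMk_posGraph (hsymm : ∀ u v, G.Adj u v → σ u v = σ v u)
    (hcycle : ¬∃ (u : V) (w : G.Walk u u), w.IsCycle ∧ w.negCount σ = 1) :
    G.IsClustering σ (G.posGraph σ).connectedComponentMk where
  eq_of_pos u v hadj hpos :=
    ConnectedComponent.sound (Adj.reachable ⟨hadj, hpos, hsymm u v hadj ▸ hpos⟩)
  ne_of_neg u _ hadj hneg hcomp :=
    hcycle ⟨u, exists_isCycle_negCount_eq_one_of_reachable hadj hneg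
      (ConnectedComponent.exact hcomp).symm⟩

end SimpleGraph

open SimpleGraph in
theorem davis_weak_structure_general {V : Type u}
    (G : SimpleGraph V) (σ : V → V → ℤ)
    (hsymm : ∀ u v, G.Adj u v → σ u v = σ v u)
    (hsign : ∀ u v, G.Adj u v → σ u v = 1 ∨ σ u v = -1) :
    (∃ (C : Type u) (f : V → C),
      (∀ u v, G.Adj u v → σ u v = 1 → f u = f v) ∧
      (∀ u v, G.Adj u v → σ u v = -1 → f u ≠ f v)) ↔
      ¬∃ (u : V) (w : G.Walk u u), w.IsCycle ∧
        ((w.darts.map fun d => σ d.fst d.snd).count (-1)) = 1 := by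
  constructor
  · rintro ⟨C, f, hpos, hneg⟩
    exact IsClustering.not_exists_isCycle_negCount_eq_one ⟨hpos, hneg⟩ hsign
  · intro hcycle
    have hf := isClustering_connectedComponentMk_posGraph hsymm hcycle
    exact ⟨_, _, hf.eq_of_pos, hf.ne_of_neg⟩

/-- Davis's weak structure theorem: a signed graph admits a clustering `f : V → C`
(positive edges inside clusters, negative edges between distinct clusters) if and only if
it contains no cycle with exactly one negative edge. -/
theorem davis_weak_structure {V : Type u} [Fintype V]
    (G : SimpleGraph V) (σ : V → V → ℤ)
    (hsymm : ∀ u v, G.Adj u v → σ u v = σ v u)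
    (hsign : ∀ u v, G.Adj u v → σ u v = 1 ∨ σ u v = -1) :
    (∃ (C : Type u) (f : V → C),
      (∀ u v, G.Adj u v → σ u v = 1 → f u = f v) ∧
      (∀ u v, G.Adj u v → σ u v = -1 → f u ≠ f v)) ↔
      ¬∃ (u : V) (w : G.Walk u u), w.IsCycle ∧
        ((w.darts.map fun d => σ d.fst d.snd).count (-1)) = 1 :=
  davis_weak_structure_general G σ hsymm hsign
end
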